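/- arXiv:2111.01725 — 2 statements merged into one kernel-verified Lean document; each statement's English description precedes it below -/
import Mathlib

section
/- There exist constants c₁, c₂ > 0 and t₀ > 0, depending only on K, such that for every x ∈ ∂K and every 0 < t ≤ t₀, the inscribed triangle of the cap satisfies c₁ · t^{3/2} ≤ A(Δ(x,t)) ≤ c₂ · t^{3/2}; consequently, for each j ∈ {0,1,2}, (c₁/400) · t^{3/2} ≤ A(Δ_j(x,t)) ≤ (c₂/400) · t^{3/2}. -/
/-!
Put `x` at the origin with `u` pointing up. By uniqueness of the normal, the disc of radius `ρ₁`
enclosing `K` and the disc of radius `ρ₀` inside `K` are both tangent to `∂K` at `x`, with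
centres on the line `x - ℝ u`. The enclosing disc confines the points of `K` at depth `t` to
half-width `√(2ρ₁t)`, so `Δ(x,t)` lies in a `t × 2√(2ρ₁t)` rectangle. For `t ≤ ρ₀` the inner
disc meets depth `t` in a chord of half-width at least `√(ρ₀t)`. As `K` slides inside a disc it
is strictly convex, so this chord lies on `[w₁, w₂]` and `Δ(x,t)` contains the cone over it from
`x`, hence a `t/2 × √(ρ₀t)` rectangle. A homothety of ratio `1/20` scales areas by `1/400`.
-/

open MeasureTheory ProbabilityTheory
open scoped RealInnerProductSpace

noncomputable section

/-- The Euclidean plane. -/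
abbrev E2 : Type := EuclideanSpace ℝ (Fin 2)

/-- The `r`-spindle convex hull of a set `X`: the intersection of all closed discs of
radius `r` containing `X`. -/
def spindleHull (r : ℝ) (X : Set E2) : Set E2 :=
  ⋂ v ∈ {v : E2 | X ⊆ Metric.closedBall v r}, Metric.closedBall v r

/-- `K` slides freely inside a disc of radius `ρ`. -/
def SlidesFreelyInDisc (K : Set E2) (ρ : ℝ) : Prop :=
  ∀ x ∈ frontier K, ∃ v : E2, dist x v = ρ ∧ K ⊆ Metric.closedBall v ρ

/-- A disc of radius `ρ` slides freely inside `K`. -/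
def DiscSlidesFreelyIn (K : Set E2) (ρ : ℝ) : Prop :=
  ∀ x ∈ frontier K, ∃ v : E2, dist x v = ρ ∧ Metric.closedBall v ρ ⊆ K

/-- `u` is an outer unit normal vector of `K` at the boundary point `x`. -/
def IsOuterNormal (K : Set E2) (x u : E2) : Prop :=
  ‖u‖ = 1 ∧ ∀ y ∈ K, (inner ℝ (y - x) u : ℝ) ≤ 0

/-- The triangle with vertices `x`, `w₁`, `w₂`. -/
def capTriangle (x w₁ w₂ : E2) : Set E2 := convexHull ℝ {x, w₁, w₂}

/-- The image of `S` under the homothety of centre `c` and ratio `1/20`. -/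
def shrink (c : E2) (S : Set E2) : Set E2 := (fun p => c + (20:ℝ)⁻¹ • (p - c)) '' S

/-- The image of `S` under the homothety of centre `c` and ratio `1/3`. -/
def shrinkThird (c : E2) (S : Set E2) : Set E2 := (fun p => c + (3:ℝ)⁻¹ • (p - c)) '' S

/-- `Â(z₀)`: the area gained by adding the point `z₀` to `{z₁, z₂}` in the spindle hull
of radius `1`. -/
def Ahat (z₀ z₁ z₂ : E2) : ℝ :=
  (volume (spindleHull 1 {z₀, z₁, z₂})).toReal
    - (volume (spindleHull 1 ({z₁, z₂} : Set E2))).toReal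

/-- The disc-cap of `K` with vertex `y` (outer unit normal `u`) and height `t`. -/
def discCap (K : Set E2) (y u : E2) (t : ℝ) : Set E2 :=
  K \ Metric.ball (y - (1 + t) • u) 1

/-- The uniform (normalized Lebesgue) measure on a set `S`. -/
def unif (S : Set E2) : Measure E2 := (volume S)⁻¹ • volume.restrict S

open Metric Set Module

theorem sub_smul_add_smul_mem_convexHull {F : Type*} [AddCommGroup F] [Module ℝ F]
    (x v w : F) {a c : ℝ} (ha : a ≤ 1) (hc : |c| ≤ a) :
    x - a • v + c • w ∈ convexHull ℝ {x, x - v - w, x - v + w} := by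
  have hc' := abs_le.mp hc
  have hcombo : x - a • v + c • w =
      ∑ i, ![1 - a, (a - c) / 2, (a + c) / 2] i • ![x, x - v - w, x - v + w] i := by
    simp only [Fin.sum_univ_three, Matrix.cons_val]
    module
  rw [hcombo]
  refine (convex_convexHull ℝ _).sum_mem (fun i _ => ?_) ?_ (fun i _ => subset_convexHull ℝ _ ?_)
  · fin_cases i <;> simp <;> linarith
  · simp only [Fin.sum_univ_three, Matrix.cons_val]; ring
  · fin_cases i <;> simp

section InnerProductSpace

variable {F : Type*} [NormedAddCommGroup F] [InnerProductSpace ℝ F]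

theorem eq_sub_smul_of_closedBall_subset_halfspace {x u v : F} {r : ℝ} (hu : ‖u‖ = 1)
    (hxv : dist x v = r) (hsub : ∀ y ∈ closedBall v r, ⟪y - x, u⟫ ≤ 0) :
    v = x - r • u := by
  have hr : 0 ≤ r := hxv ▸ dist_nonneg
  have hle : r ≤ ⟪x - v, u⟫ := by
    have h := hsub (v + r • u) (by simp [norm_smul, hu, abs_of_nonneg hr])
    rw [show v + r • u - x = r • u - (x - v) by abel, inner_sub_left, real_inner_smul_left,
      real_inner_self_eq_norm_sq, hu] at h
    linarith
  have hcs : ⟪x - v, u⟫ = ‖x - v‖ * ‖u‖ :=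
    le_antisymm (real_inner_le_norm _ _) (by rwa [← dist_eq_norm, hxv, hu, mul_one])
  have h := inner_eq_norm_mul_iff_real.mp hcs
  rw [hu, one_smul, ← dist_eq_norm, hxv] at h
  rw [← h, sub_sub_cancel]

theorem inner_sub_nonpos_of_mem_closedBall {x y v : F} {r : ℝ} (hy : y ∈ closedBall v r)
    (hxv : dist x v = r) : ⟪y - x, x - v⟫ ≤ 0 := by
  rw [mem_closedBall, dist_eq_norm] at hy
  rw [dist_eq_norm] at hxv
  have hcs := real_inner_le_norm (y - v) (x - v)
  rw [show y - x = (y - v) - (x - v) by abel, inner_sub_left, real_inner_self_eq_norm_sq]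
  nlinarith [norm_nonneg (x - v)]

theorem collinear_of_forall_inner_sub_eq [Fact (finrank ℝ F = 2)] {s : Set F} {x u : F}
    {r : ℝ} (hu : u ≠ 0) (hs : ∀ p ∈ s, ⟪p - x, u⟫ = r) : Collinear ℝ s := by
  have : FiniteDimensional ℝ F := .of_fact_finrank_eq_succ 1
  have hle : vectorSpan ℝ s ≤ (ℝ ∙ u)ᗮ := by
    rw [vectorSpan_def, Submodule.span_le]
    rintro _ ⟨p, hp, q, hq, rfl⟩
    rw [SetLike.mem_coe, Submodule.mem_orthogonal_singleton_iff_inner_right, real_inner_comm]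
    change ⟪p - q, u⟫ = 0
    rw [show p - q = (p - x) - (q - x) by abel, inner_sub_left, hs p hp, hs q hq, sub_self]
  rw [collinear_iff_finrank_le_one]
  exact (Submodule.finrank_mono hle).trans
    (Submodule.finrank_orthogonal_span_singleton (n := 1) hu).le

end InnerProductSpace

section Sliding

variable {K : Set E2} {ρ ρ₀ ρ₁ : ℝ} {x u : E2}

theorem DiscSlidesFreelyIn.closedBall_sub_smul_subset (hK : DiscSlidesFreelyIn K ρ)
    (hx : x ∈ frontier K) (hu : IsOuterNormal K x u) : closedBall (x - ρ • u) ρ ⊆ K := by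
  obtain ⟨v, hxv, hvK⟩ := hK x hx
  rwa [← eq_sub_smul_of_closedBall_subset_halfspace hu.1 hxv fun y hy => hu.2 y (hvK hy)]

-- The outer normal of the enclosing disc at `x` is also an outer normal of the inner disc at
-- `x`, so it equals `u`.
theorem SlidesFreelyInDisc.subset_closedBall_sub_smul (hout : SlidesFreelyInDisc K ρ₁)
    (hin : DiscSlidesFreelyIn K ρ₀) (hρ₀ : 0 < ρ₀) (hρ₀₁ : ρ₀ ≤ ρ₁) (hx : x ∈ frontier K)
    (hu : IsOuterNormal K x u) : K ⊆ closedBall (x - ρ₁ • u) ρ₁ := by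
  obtain ⟨v, hxv, hKv⟩ := hout x hx
  have hρ₁ : 0 < ρ₁ := hρ₀.trans_le hρ₀₁
  have hu' : ‖ρ₁⁻¹ • (x - v)‖ = 1 := by
    rw [norm_smul, ← dist_eq_norm, hxv, norm_inv, Real.norm_eq_abs, abs_of_pos hρ₁,
      inv_mul_cancel₀ hρ₁.ne']
  have hcentre := eq_sub_smul_of_closedBall_subset_halfspace (x := x) (v := x - ρ₀ • u)
    (r := ρ₀) hu' (by simp [norm_smul, hu.1, abs_of_pos hρ₀]) fun y hy => by
      rw [real_inner_smul_right]
      exact mul_nonpos_of_nonneg_of_nonpos (by positivity)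
        (inner_sub_nonpos_of_mem_closedBall (hKv (hin.closedBall_sub_smul_subset hx hu hy)) hxv)
  rw [sub_right_inj, smul_right_inj hρ₀.ne'] at hcentre
  rwa [hcentre, smul_inv_smul₀ hρ₁.ne', sub_sub_cancel]

theorem SlidesFreelyInDisc.notMem_openSegment (hK : SlidesFreelyInDisc K ρ) (hρ : ρ ≠ 0)
    {w z z' : E2} (hw : w ∈ frontier K) (hz : z ∈ closure K) (hz' : z' ∈ closure K)
    (hne : z ≠ z') : w ∉ openSegment ℝ z z' := by
  obtain ⟨v, hwv, hKv⟩ := hK w hw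
  have hcl := closure_minimal hKv isClosed_closedBall
  intro hmem
  have h := (strictConvex_closedBall ℝ v ρ).openSegment_subset (hcl hz) (hcl hz') hne hmem
  rw [interior_closedBall v hρ, mem_ball] at h
  exact h.ne hwv

theorem SlidesFreelyInDisc.mem_segment_of_collinear (hK : SlidesFreelyInDisc K ρ)
    (hρ : ρ ≠ 0) {w₁ w₂ q : E2} (hw₁ : w₁ ∈ frontier K) (hw₂ : w₂ ∈ frontier K)
    (hq : q ∈ closure K) (hne : w₁ ≠ w₂) (hcol : Collinear ℝ {w₁, q, w₂}) :
    q ∈ segment ℝ w₁ w₂ := by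
  have hw₁' := frontier_subset_closure hw₁
  have hw₂' := frontier_subset_closure hw₂
  by_cases hq₁ : q = w₁
  · exact hq₁ ▸ left_mem_segment ℝ _ _
  by_cases hq₂ : q = w₂
  · exact hq₂ ▸ right_mem_segment ℝ _ _
  rcases hcol.wbtw_or_wbtw_or_wbtw with h | h | h
  · exact h.mem_segment
  · exact absurd (mem_openSegment_of_ne_left_right hq₂ hne h.mem_segment)
      (hK.notMem_openSegment hρ hw₂ hq hw₁' hq₁)
  · exact absurd (mem_openSegment_of_ne_left_right (Ne.symm hne) hq₁ h.mem_segment)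
      (hK.notMem_openSegment hρ hw₁ hw₂' hq (Ne.symm hq₂))

end Sliding

theorem exists_orthonormalBasis_zero_eq {u : E2} (hu : ‖u‖ = 1) :
    ∃ b : OrthonormalBasis (Fin 2) ℝ E2, b 0 = u := by
  have hortho : Orthonormal ℝ (({0} : Set (Fin 2)).domRestrict fun _ => u) :=
    ⟨fun _ => hu, fun i j hij => absurd (Subsingleton.elim i j) hij⟩
  obtain ⟨b, hb⟩ := hortho.exists_orthonormalBasis_extension_of_card_eq (by simp)
  exact ⟨b, hb 0 rfl⟩

section Coordinates

variable (b : OrthonormalBasis (Fin 2) ℝ E2) (x : E2) {w₁ w₂ : E2} {R s t : ℝ}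

def coordRect (I J : Set ℝ) : Set E2 := {z | ⟪z - x, b 0⟫ ∈ I ∧ ⟪z - x, b 1⟫ ∈ J}

theorem volume_coordRect {I J : Set ℝ} (hI : MeasurableSet I) (hJ : MeasurableSet J) :
    volume (coordRect b x I J) = volume I * volume J := by
  have hmp : MeasurePreserving (fun z : E2 => (b.repr (z - x)).ofLp) :=
    (EuclideanSpace.volume_preserving_symm_measurableEquiv_toLp (Fin 2)).comp
      (b.measurePreserving_repr.comp (measurePreserving_sub_right volume x))
  have hrect : coordRect b x I J = (fun z : E2 => (b.repr (z - x)).ofLp) ⁻¹' univ.pi ![I, J] := by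
    ext z
    simp [coordRect, Fin.forall_fin_two, b.repr_apply_apply, real_inner_comm, inner_sub_left]
  have hpi : MeasurableSet (univ.pi ![I, J]) :=
    MeasurableSet.univ_pi fun i => by fin_cases i <;> assumption
  rw [hrect, hmp.measure_preimage hpi.nullMeasurableSet, volume_pi_pi, Fin.prod_univ_two]
  rfl

theorem toReal_volume_coordRect_Icc {a a' c c' : ℝ} (ha : a ≤ a') (hc : c ≤ c') :
    (volume (coordRect b x (Icc a a') (Icc c c'))).toReal = (a' - a) * (c' - c) := by
  rw [volume_coordRect b x measurableSet_Icc measurableSet_Icc, Real.volume_Icc, Real.volume_Icc,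
    ENNReal.toReal_mul, ENNReal.toReal_ofReal (by linarith), ENNReal.toReal_ofReal (by linarith)]

theorem convex_coordRect {I J : Set ℝ} (hI : Convex ℝ I) (hJ : Convex ℝ J) :
    Convex ℝ (coordRect b x I J) := by
  intro p hp q hq a a' ha ha' haa'
  obtain rfl : a' = 1 - a := by linarith
  have hcoord (i : Fin 2) :
      ⟪a • p + (1 - a) • q - x, b i⟫ = a • ⟪p - x, b i⟫ + (1 - a) • ⟪q - x, b i⟫ := by
    rw [show a • p + (1 - a) • q - x = a • (p - x) + (1 - a) • (q - x) by module,
      inner_add_left, real_inner_smul_left, real_inner_smul_left, smul_eq_mul, smul_eq_mul]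
  simp only [coordRect, mem_ofPred_eq, hcoord]
  exact ⟨hI hp.1 hq.1 ha ha' haa', hJ hp.2 hq.2 ha ha' haa'⟩

theorem eq_add_inner_smul_add_inner_smul (z : E2) :
    z = x + ⟪z - x, b 0⟫ • b 0 + ⟪z - x, b 1⟫ • b 1 := by
  have h := b.sum_repr' (z - x)
  simp only [Fin.sum_univ_two, real_inner_comm] at h
  rw [add_assoc, h, add_sub_cancel]

theorem norm_sq_eq_inner_sq_add_inner_sq (v : E2) : ‖v‖ ^ 2 = ⟪v, b 0⟫ ^ 2 + ⟪v, b 1⟫ ^ 2 := by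
  simp [← b.sum_sq_norm_inner_left v, Fin.sum_univ_two]

theorem inner_sub_smul_add_smul_sub (e : ℝ) (i : Fin 2) :
    ⟪x - t • b 0 + e • b 1 - x, b i⟫ = ![-t, e] i := by
  fin_cases i <;> simp [inner_add_left, inner_sub_left, real_inner_smul_left, b.inner_eq_ite]

theorem sq_inner_le_of_mem_closedBall {w : E2} (hw : w ∈ closedBall (x - R • b 0) R)
    (hwt : ⟪w - x, b 0⟫ = -t) : ⟪w - x, b 1⟫ ^ 2 ≤ 2 * R * t := by
  rw [mem_closedBall, dist_eq_norm] at hw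
  have hsq := pow_le_pow_left₀ (norm_nonneg _) hw 2
  rw [norm_sq_eq_inner_sq_add_inner_sq b, show w - (x - R • b 0) = (w - x) + R • b 0 by abel]
    at hsq
  simp only [inner_add_left, real_inner_smul_left, b.inner_eq_ite, hwt] at hsq
  norm_num at hsq
  nlinarith [sq_nonneg t]

theorem sub_smul_add_smul_mem_closedBall {e : ℝ} (ht : 0 ≤ t) (htR : t ≤ R)
    (he : e ^ 2 ≤ R * t) : x - t • b 0 + e • b 1 ∈ closedBall (x - R • b 0) R := by
  rw [mem_closedBall, dist_eq_norm, ← pow_le_pow_iff_left₀ (norm_nonneg _) (ht.trans htR)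
    two_ne_zero, norm_sq_eq_inner_sq_add_inner_sq b,
    show x - t • b 0 + e • b 1 - (x - R • b 0) = x - t • b 0 + e • b 1 - x + R • b 0 by abel]
  simp only [inner_add_left, real_inner_smul_left, b.inner_eq_ite, inner_sub_smul_add_smul_sub]
  norm_num
  nlinarith

theorem capTriangle_subset_coordRect (ht : 0 ≤ t) (hw₁ : w₁ ∈ closedBall (x - R • b 0) R)
    (hw₁t : ⟪w₁ - x, b 0⟫ = -t) (hw₂ : w₂ ∈ closedBall (x - R • b 0) R)
    (hw₂t : ⟪w₂ - x, b 0⟫ = -t) :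
    capTriangle x w₁ w₂ ⊆ coordRect b x (Icc (-t) 0) (Icc (-√(2 * R * t)) √(2 * R * t)) := by
  have hvertex {w : E2} (hw : w ∈ closedBall (x - R • b 0) R) (hwt : ⟪w - x, b 0⟫ = -t) :
      w ∈ coordRect b x (Icc (-t) 0) (Icc (-√(2 * R * t)) √(2 * R * t)) :=
    ⟨by rw [hwt]; exact ⟨le_rfl, by linarith⟩,
      abs_le.mp (Real.abs_le_sqrt (sq_inner_le_of_mem_closedBall b x hw hwt))⟩
  refine convexHull_min ?_ (convex_coordRect b x (convex_Icc _ _) (convex_Icc _ _))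
  rintro z (rfl | rfl | rfl)
  · refine ⟨?_, ?_⟩ <;> simp only [sub_self, inner_zero_left, mem_Icc]
    · exact ⟨neg_nonpos.mpr ht, le_rfl⟩
    · exact ⟨neg_nonpos.mpr (Real.sqrt_nonneg _), Real.sqrt_nonneg _⟩
  · exact hvertex hw₁ hw₁t
  · exact hvertex hw₂ hw₂t

theorem coordRect_subset_capTriangle (hs : 0 < s) (ht : 0 < t)
    (hp : x - t • b 0 - s • b 1 ∈ segment ℝ w₁ w₂)
    (hq : x - t • b 0 + s • b 1 ∈ segment ℝ w₁ w₂) :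
    coordRect b x (Icc (-t) (-t / 2)) (Icc (-(s / 2)) (s / 2)) ⊆ capTriangle x w₁ w₂ := by
  have hsub : convexHull ℝ {x, x - t • b 0 - s • b 1, x - t • b 0 + s • b 1}
      ⊆ capTriangle x w₁ w₂ := by
    refine convexHull_min ?_ (convex_convexHull ℝ _)
    have hw₁ : w₁ ∈ capTriangle x w₁ w₂ := subset_convexHull ℝ _ (by simp)
    have hw₂ : w₂ ∈ capTriangle x w₁ w₂ := subset_convexHull ℝ _ (by simp)
    have hseg := (convex_convexHull ℝ _).segment_subset hw₁ hw₂
    rintro z (rfl | rfl | rfl)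
    · exact subset_convexHull ℝ _ (by simp)
    · exact hseg hp
    · exact hseg hq
  rintro z ⟨⟨hz₀, hz₀'⟩, hz₁⟩
  rw [eq_add_inner_smul_add_inner_smul b x z]
  convert hsub (sub_smul_add_smul_mem_convexHull x (t • b 0) (s • b 1)
    (a := -⟪z - x, b 0⟫ / t) (c := ⟪z - x, b 1⟫ / s) ?_ ?_) using 1
  · rw [smul_smul, smul_smul, div_mul_cancel₀ _ hs.ne', neg_div, neg_mul, div_mul_cancel₀ _ ht.ne',
      neg_smul, sub_neg_eq_add]
  · rw [div_le_one ht]; linarith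
  · rw [abs_div, abs_of_pos hs, div_le_div_iff₀ hs ht]
    have := abs_le.mpr hz₁
    nlinarith

theorem le_toReal_volume_capTriangle (hs : 0 < s) (ht : 0 < t)
    (hp : x - t • b 0 - s • b 1 ∈ segment ℝ w₁ w₂)
    (hq : x - t • b 0 + s • b 1 ∈ segment ℝ w₁ w₂) :
    t / 2 * s ≤ (volume (capTriangle x w₁ w₂)).toReal := by
  have hfin : volume (capTriangle x w₁ w₂) ≠ ⊤ :=
    ((toFinite {x, w₁, w₂}).isCompact_convexHull (𝕜 := ℝ)).measure_lt_top.ne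
  calc t / 2 * s
      = (volume (coordRect b x (Icc (-t) (-t / 2)) (Icc (-(s / 2)) (s / 2)))).toReal := by
        rw [toReal_volume_coordRect_Icc b x (by linarith) (by linarith)]
        ring
    _ ≤ (volume (capTriangle x w₁ w₂)).toReal :=
        ENNReal.toReal_mono hfin (measure_mono (coordRect_subset_capTriangle b x hs ht hp hq))

theorem toReal_volume_capTriangle_le (ht : 0 ≤ t) (hw₁ : w₁ ∈ closedBall (x - R • b 0) R)
    (hw₁t : ⟪w₁ - x, b 0⟫ = -t) (hw₂ : w₂ ∈ closedBall (x - R • b 0) R)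
    (hw₂t : ⟪w₂ - x, b 0⟫ = -t) :
    (volume (capTriangle x w₁ w₂)).toReal ≤ t * (2 * √(2 * R * t)) := by
  have hfin : volume (coordRect b x (Icc (-t) 0) (Icc (-√(2 * R * t)) √(2 * R * t))) ≠ ⊤ := by
    rw [volume_coordRect b x measurableSet_Icc measurableSet_Icc]
    exact ENNReal.mul_ne_top measure_Icc_lt_top.ne measure_Icc_lt_top.ne
  calc (volume (capTriangle x w₁ w₂)).toReal
      ≤ (volume (coordRect b x (Icc (-t) 0) (Icc (-√(2 * R * t)) √(2 * R * t)))).toReal :=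
        ENNReal.toReal_mono hfin
          (measure_mono (capTriangle_subset_coordRect b x ht hw₁ hw₁t hw₂ hw₂t))
    _ = t * (2 * √(2 * R * t)) := by
        rw [toReal_volume_coordRect_Icc b x (by linarith)
          (by linarith [Real.sqrt_nonneg (2 * R * t)])]
        ring

end Coordinates

theorem toReal_volume_shrink (c : E2) (S : Set E2) :
    (volume (shrink c S)).toReal = (volume S).toReal / 400 := by
  have himage : shrink c S = AffineMap.homothety c (20 : ℝ)⁻¹ '' S := by
    simp only [shrink, AffineMap.coe_homothety, vsub_eq_sub, vadd_eq_add, add_comm]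
  rw [himage, Measure.addHaar_image_homothety, finrank_euclideanSpace_fin, ENNReal.toReal_mul,
    ENNReal.toReal_ofReal (by positivity)]
  norm_num [div_eq_inv_mul]

theorem toReal_volume_capTriangle_bounds {K : Set E2} {ρ₀ ρ₁ t : ℝ} {x u w₁ w₂ : E2}
    (hin : DiscSlidesFreelyIn K ρ₀) (hout : SlidesFreelyInDisc K ρ₁) (hρ₀ : 0 < ρ₀)
    (hρ₀₁ : ρ₀ ≤ ρ₁) (hx : x ∈ frontier K) (hu : IsOuterNormal K x u) (ht : 0 < t)
    (htρ₀ : t ≤ ρ₀) (hne : w₁ ≠ w₂) (hw₁ : w₁ ∈ frontier K) (hw₁t : ⟪w₁ - x, u⟫ = -t)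
    (hw₂ : w₂ ∈ frontier K) (hw₂t : ⟪w₂ - x, u⟫ = -t) :
    √ρ₀ / 2 * t ^ ((3 : ℝ) / 2) ≤ (volume (capTriangle x w₁ w₂)).toReal ∧
      (volume (capTriangle x w₁ w₂)).toReal ≤ 2 * √(2 * ρ₁) * t ^ ((3 : ℝ) / 2) := by
  have : Fact (finrank ℝ E2 = 2) := ⟨finrank_euclideanSpace_fin⟩
  obtain ⟨b, rfl⟩ := exists_orthonormalBasis_zero_eq hu.1
  have ht32 : t ^ ((3 : ℝ) / 2) = t * √t := by
    rw [show (3 : ℝ) / 2 = 1 + 1 / 2 by norm_num, Real.rpow_add ht, Real.rpow_one,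
      Real.sqrt_eq_rpow]
  have hinner := hin.closedBall_sub_smul_subset hx hu
  have houter := closure_minimal (hout.subset_closedBall_sub_smul hin hρ₀ hρ₀₁ hx hu)
    isClosed_closedBall
  have hchord {e : ℝ} (he : e ^ 2 ≤ ρ₀ * t) : x - t • b 0 + e • b 1 ∈ segment ℝ w₁ w₂ := by
    refine hout.mem_segment_of_collinear (hρ₀.trans_le hρ₀₁).ne' hw₁ hw₂
      (subset_closure (hinner (sub_smul_add_smul_mem_closedBall b x ht.le htρ₀ he))) hne
      (collinear_of_forall_inner_sub_eq (x := x) (r := -t) (b.orthonormal.ne_zero 0) ?_)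
    rintro p (rfl | rfl | rfl)
    exacts [hw₁t, inner_sub_smul_add_smul_sub b x e 0, hw₂t]
  have hs2 : √(ρ₀ * t) ^ 2 = ρ₀ * t := Real.sq_sqrt (by positivity)
  constructor
  · calc √ρ₀ / 2 * t ^ ((3 : ℝ) / 2) = t / 2 * √(ρ₀ * t) := by
          rw [ht32, Real.sqrt_mul hρ₀.le]; ring
      _ ≤ (volume (capTriangle x w₁ w₂)).toReal :=
          le_toReal_volume_capTriangle b x (by positivity) ht
            (by simpa [sub_eq_add_neg] using hchord (e := -√(ρ₀ * t)) (by rw [neg_sq, hs2]))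
            (hchord hs2.le)
  · calc (volume (capTriangle x w₁ w₂)).toReal ≤ t * (2 * √(2 * ρ₁ * t)) :=
          toReal_volume_capTriangle_le b x ht.le (houter (frontier_subset_closure hw₁)) hw₁t
            (houter (frontier_subset_closure hw₂)) hw₂t
      _ = 2 * √(2 * ρ₁) * t ^ ((3 : ℝ) / 2) := by
          rw [ht32, Real.sqrt_mul (by linarith) t]; ring

theorem capTriangle_area_bounds_general
    (K : Set E2)
    (ρ₀ ρ₁ : ℝ) (hρ₀ : 0 < ρ₀) (hρ₀₁ : ρ₀ ≤ ρ₁)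
    (hin : DiscSlidesFreelyIn K ρ₀) (hout : SlidesFreelyInDisc K ρ₁) :
    ∃ c₁ > (0:ℝ), ∃ c₂ > (0:ℝ), ∃ t₀ > (0:ℝ),
      ∀ x ∈ frontier K, ∀ u : E2, IsOuterNormal K x u →
      ∀ t : ℝ, 0 < t → t ≤ t₀ →
      ∀ w₁ w₂ : E2, w₁ ≠ w₂ →
        w₁ ∈ frontier K → (inner ℝ (w₁ - x) u : ℝ) = -t →
        w₂ ∈ frontier K → (inner ℝ (w₂ - x) u : ℝ) = -t →
        (c₁ * t ^ ((3:ℝ)/2) ≤ (volume (capTriangle x w₁ w₂)).toReal ∧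
          (volume (capTriangle x w₁ w₂)).toReal ≤ c₂ * t ^ ((3:ℝ)/2)) ∧
        ∀ j : Fin 3,
          c₁ / 400 * t ^ ((3:ℝ)/2)
              ≤ (volume (shrink (![x, w₁, w₂] j) (capTriangle x w₁ w₂))).toReal ∧
            (volume (shrink (![x, w₁, w₂] j) (capTriangle x w₁ w₂))).toReal
              ≤ c₂ / 400 * t ^ ((3:ℝ)/2) := by
  have hρ₁ : 0 < ρ₁ := hρ₀.trans_le hρ₀₁
  refine ⟨√ρ₀ / 2, by positivity, 2 * √(2 * ρ₁), by positivity, ρ₀, hρ₀, ?_⟩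
  intro x hx u hu t ht htρ₀ w₁ w₂ hne hw₁ hw₁t hw₂ hw₂t
  have hbounds :=
    toReal_volume_capTriangle_bounds hin hout hρ₀ hρ₀₁ hx hu ht htρ₀ hne hw₁ hw₁t hw₂ hw₂t
  refine ⟨hbounds, fun j => ?_⟩
  rw [toReal_volume_shrink]
  constructor <;> linarith [hbounds.1, hbounds.2]

theorem capTriangle_area_bounds
    (K : Set E2) (hK : IsCompact K) (hKconv : Convex ℝ K)
    (hKint : (interior K).Nonempty)
    (ρ₀ ρ₁ : ℝ) (hρ₀ : 0 < ρ₀) (hρ₀₁ : ρ₀ ≤ ρ₁) (hρ₁ : ρ₁ < 1)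
    (hin : DiscSlidesFreelyIn K ρ₀) (hout : SlidesFreelyInDisc K ρ₁) :
    ∃ c₁ > (0:ℝ), ∃ c₂ > (0:ℝ), ∃ t₀ > (0:ℝ),
      ∀ x ∈ frontier K, ∀ u : E2, IsOuterNormal K x u →
      ∀ t : ℝ, 0 < t → t ≤ t₀ →
      ∀ w₁ w₂ : E2, w₁ ≠ w₂ →
        w₁ ∈ frontier K → (inner ℝ (w₁ - x) u : ℝ) = -t →
        w₂ ∈ frontier K → (inner ℝ (w₂ - x) u : ℝ) = -t →
        (c₁ * t ^ ((3:ℝ)/2) ≤ (volume (capTriangle x w₁ w₂)).toReal ∧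
          (volume (capTriangle x w₁ w₂)).toReal ≤ c₂ * t ^ ((3:ℝ)/2)) ∧
        ∀ j : Fin 3,
          c₁ / 400 * t ^ ((3:ℝ)/2)
              ≤ (volume (shrink (![x, w₁, w₂] j) (capTriangle x w₁ w₂))).toReal ∧
            (volume (shrink (![x, w₁, w₂] j) (capTriangle x w₁ w₂))).toReal
              ≤ c₂ / 400 * t ^ ((3:ℝ)/2) :=
  capTriangle_area_bounds_general K ρ₀ ρ₁ hρ₀ hρ₀₁ hin hout
end
end

section
/- There exist constants c > 0 and t₀ > 0, depending only on K, such that for every 0 < t ≤ t₀ and all boundary points y, y' ∈ ∂K with |y − y'| ≥ c·√t, the disc-caps D(y,t) and D(y',t) are disjoint. -/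
open MeasureTheory ProbabilityTheory
open scoped RealInnerProductSpace

noncomputable section

/-! The disc-cap `D(y,t)` lies in the lune between the disc of radius `ρ₁` containing `K` and
tangent at `y`, and the unit disc tangent at `y - t • u`. Since `ρ₁ < 1`, an elementary
computation puts this lune inside the disc of radius `√(2ρ₁t/(1-ρ₁))` about `y`, so caps whose
vertices are more than twice that apart cannot meet. The outer disc is centred on the normal
line through `u` because the inner disc of radius `ρ₀` at `y` forces the outer normal at `y`
to be unique. -/

lemma mul_dist_sq_le_of_mem_closedBall_of_notMem_ball {V : Type*} [NormedAddCommGroup V]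
    [InnerProductSpace ℝ V] {y u z : V} {ρ t : ℝ} (hu : ‖u‖ = 1) (hρ : ρ < 1) (ht : 0 ≤ t)
    (hz : z ∈ Metric.closedBall (y - ρ • u) ρ) (hz' : z ∉ Metric.ball (y - (1 + t) • u) 1) :
    (1 - ρ) * dist z y ^ 2 ≤ 2 * ρ * t := by
  have expand : ∀ r : ℝ, ‖z - (y - r • u)‖ ^ 2 = dist z y ^ 2 + 2 * r * ⟪z - y, u⟫ + r ^ 2 := by
    intro r
    rw [show z - (y - r • u) = (z - y) + r • u by abel, norm_add_sq_real, real_inner_smul_right,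
      norm_smul, mul_pow, Real.norm_eq_abs, sq_abs, hu, dist_eq_norm]
    ring
  rw [Metric.mem_closedBall, dist_eq_norm] at hz
  rw [Metric.mem_ball, dist_eq_norm, not_lt] at hz'
  have hρ₀ : 0 ≤ ρ := (norm_nonneg _).trans hz
  have hsmall := expand ρ ▸ pow_le_pow_left₀ (norm_nonneg _) hz 2
  have hlarge := expand (1 + t) ▸ pow_le_pow_left₀ zero_le_one hz' 2
  set s := -⟪z - y, u⟫
  have hs : (1 - ρ) * s ≤ t := by
    rcases le_or_gt s 0 with hs | hs
    · nlinarith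
    · nlinarith [mul_pos hs (by linarith : (0 : ℝ) < 1 - ρ + t)]
  nlinarith

lemma IsOuterNormal.eq_sub_smul_of_closedBall_subset {K : Set E2} {y u w : E2} {ρ : ℝ}
    (hu : IsOuterNormal K y u) (hρ : 0 < ρ) (hyw : dist y w = ρ)
    (hw : Metric.closedBall w ρ ⊆ K) : w = y - ρ • u := by
  have hfar : w + ρ • u ∈ K := hw <| by
    simp [norm_smul, hu.1, abs_of_pos hρ]
  have hinner : ⟪w - y, u⟫ ≤ -ρ := by
    have := hu.2 _ hfar
    rw [show w + ρ • u - y = (w - y) + ρ • u by abel, inner_add_left, real_inner_smul_left,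
      real_inner_self_eq_norm_sq, hu.1] at this
    linarith
  have hzero : ‖(w - y) + ρ • u‖ ^ 2 ≤ 0 := by
    rw [norm_add_sq_real, real_inner_smul_right, norm_smul, ← dist_eq_norm, dist_comm, hyw,
      Real.norm_eq_abs, abs_of_pos hρ, hu.1]
    nlinarith
  have : (w - y) + ρ • u = 0 := by
    simpa using le_antisymm hzero (sq_nonneg _)
  rw [← sub_eq_zero, ← this]
  abel

lemma isOuterNormal_of_subset_closedBall {K : Set E2} {y v : E2} {ρ : ℝ} (hρ : 0 < ρ)
    (hyv : dist y v = ρ) (hK : K ⊆ Metric.closedBall v ρ) :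
    IsOuterNormal K y (ρ⁻¹ • (y - v)) := by
  rw [dist_eq_norm] at hyv
  refine ⟨by rw [norm_smul, hyv, Real.norm_eq_abs, abs_of_pos (inv_pos.2 hρ), inv_mul_cancel₀ hρ.ne'],
    fun z hz => ?_⟩
  have hzv : ‖(z - y) + (y - v)‖ ≤ ρ := by
    simpa [dist_eq_norm] using hK hz
  have := pow_le_pow_left₀ (norm_nonneg _) hzv 2
  rw [norm_add_sq_real, hyv] at this
  rw [real_inner_smul_right]
  exact mul_nonpos_of_nonneg_of_nonpos (inv_pos.2 hρ).le (by nlinarith [sq_nonneg ‖z - y‖])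

lemma subset_closedBall_of_isOuterNormal {K : Set E2} {y u : E2} {ρ₀ ρ₁ : ℝ}
    (hρ₀ : 0 < ρ₀) (hρ₁ : 0 < ρ₁) (hin : DiscSlidesFreelyIn K ρ₀)
    (hout : SlidesFreelyInDisc K ρ₁) (hy : y ∈ frontier K) (hu : IsOuterNormal K y u) :
    K ⊆ Metric.closedBall (y - ρ₁ • u) ρ₁ := by
  obtain ⟨v, hyv, hv⟩ := hout y hy
  obtain ⟨w, hyw, hw⟩ := hin y hy
  have hn := isOuterNormal_of_subset_closedBall hρ₁ hyv hv
  have hun : u = ρ₁⁻¹ • (y - v) := smul_right_injective E2 hρ₀.ne' <| sub_right_injective <|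
    (hu.eq_sub_smul_of_closedBall_subset hρ₀ hyw hw).symm.trans
      (hn.eq_sub_smul_of_closedBall_subset hρ₀ hyw hw)
  rwa [hun, smul_smul, mul_inv_cancel₀ hρ₁.ne', one_smul, sub_sub_cancel]

lemma discCap_subset_closedBall {K : Set E2} {y u : E2} {ρ₀ ρ₁ t : ℝ}
    (hρ₀ : 0 < ρ₀) (hρ₁ : 0 < ρ₁) (hρ₁' : ρ₁ < 1) (ht : 0 ≤ t)
    (hin : DiscSlidesFreelyIn K ρ₀) (hout : SlidesFreelyInDisc K ρ₁)
    (hy : y ∈ frontier K) (hu : IsOuterNormal K y u) :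
    discCap K y u t ⊆ Metric.closedBall y (√(2 * ρ₁ / (1 - ρ₁)) * √t) := by
  rintro z ⟨hzK, hz⟩
  have hsq := mul_dist_sq_le_of_mem_closedBall_of_notMem_ball hu.1 hρ₁' ht
    (subset_closedBall_of_isOuterNormal hρ₀ hρ₁ hin hout hy hu hzK) hz
  rw [Metric.mem_closedBall, ← Real.sqrt_mul (by have := hρ₁.le; bound),
    Real.le_sqrt dist_nonneg (by have := hρ₁.le; bound), div_mul_eq_mul_div,
    le_div_iff₀ (by linarith)]
  linarith

theorem discCaps_disjoint_of_separated_general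
    (K : Set E2)
    (ρ₀ ρ₁ : ℝ) (hρ₀ : 0 < ρ₀) (hρ₀₁ : ρ₀ ≤ ρ₁) (hρ₁ : ρ₁ < 1)
    (hin : DiscSlidesFreelyIn K ρ₀) (hout : SlidesFreelyInDisc K ρ₁) :
    ∃ c > (0:ℝ), ∃ t₀ > (0:ℝ), ∀ t : ℝ, 0 < t → t ≤ t₀ →
      ∀ y ∈ frontier K, ∀ y' ∈ frontier K,
      ∀ u u' : E2, IsOuterNormal K y u → IsOuterNormal K y' u' →
        c * Real.sqrt t ≤ dist y y' →
        Disjoint (discCap K y u t) (discCap K y' u' t) := by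
  have hρ₁pos : 0 < ρ₁ := hρ₀.trans_le hρ₀₁
  set C := √(2 * ρ₁ / (1 - ρ₁))
  have hC : 0 < C := Real.sqrt_pos.2 (div_pos (by positivity) (by linarith))
  refine ⟨3 * C, by positivity, 1, one_pos, fun t ht _ y hy y' hy' u u' hu hu' hsep => ?_⟩
  refine (Metric.closedBall_disjoint_closedBall ?_).mono
    (discCap_subset_closedBall hρ₀ hρ₁pos hρ₁ ht.le hin hout hy hu)
    (discCap_subset_closedBall hρ₀ hρ₁pos hρ₁ ht.le hin hout hy' hu')
  nlinarith [mul_pos hC (Real.sqrt_pos.2 ht)]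

theorem discCaps_disjoint_of_separated
    (K : Set E2) (hK : IsCompact K) (hKconv : Convex ℝ K)
    (hKint : (interior K).Nonempty)
    (ρ₀ ρ₁ : ℝ) (hρ₀ : 0 < ρ₀) (hρ₀₁ : ρ₀ ≤ ρ₁) (hρ₁ : ρ₁ < 1)
    (hin : DiscSlidesFreelyIn K ρ₀) (hout : SlidesFreelyInDisc K ρ₁) :
    ∃ c > (0:ℝ), ∃ t₀ > (0:ℝ), ∀ t : ℝ, 0 < t → t ≤ t₀ →
      ∀ y ∈ frontier K, ∀ y' ∈ frontier K,
      ∀ u u' : E2, IsOuterNormal K y u → IsOuterNormal K y' u' →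
        c * Real.sqrt t ≤ dist y y' →
        Disjoint (discCap K y u t) (discCap K y' u' t) :=
  discCaps_disjoint_of_separated_general K ρ₀ ρ₁ hρ₀ hρ₀₁ hρ₁ hin hout
end
end
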